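/- arXiv:1604.04417 — 3 statements merged into one kernel-verified Lean document; each statement's English description precedes it below -/
import Mathlib

section
/- Let T be a weak-local triple derivation on a C*-algebra A and let e be a partial isometry in A. Then P₂(e)(T(e)) = −Q(e)(T(e)), i.e., e e* T(e) e* e = −e T(e)* e. -/
/-!
Since `{e,e,e} = e`, the triple Leibniz rule gives `δ e = {δ e,e,e} + {e,δ e,e} + {e,e,δ e}` for
every triple derivation `δ`, and compressing by `P₂(e)` yields `P₂(e)(δ e) = -Q(e)(δ e)`.
The map `x ↦ P₂(e) x + Q(e) x` is only conjugate linear, so it cannot be fed to a functional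
directly; instead, for each `φ` the complex linear functional `ψ x = φ (P₂(e) x) + conj φ (Q(e) x)`
has `re ψ x = re φ (P₂(e) x + Q(e) x)`. Weak locality applied to `ψ` shows that
`re φ (P₂(e)(T e) + Q(e)(T e)) = 0` for all `φ`, and Hahn–Banach (with `φ` and `I • φ`) concludes.
-/

variable {A : Type*} [NonUnitalNormedRing A] [StarRing A] [CStarRing A]
  [NormedSpace ℂ A] [IsScalarTower ℂ A A] [SMulCommClass ℂ A A]
  [StarModule ℂ A] [CompleteSpace A]

/-- The triple product `{a,b,c} = (1/2)(a b* c + c b* a)` on a C*-algebra. -/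
noncomputable def tp (a b c : A) : A :=
  (2⁻¹ : ℂ) • (a * star b * c + c * star b * a)

/-- A triple derivation: a (complex) linear map satisfying the triple Leibniz rule. -/
def IsTripleDerivation (δ : A → A) : Prop :=
  IsLinearMap ℂ δ ∧
    ∀ a b c : A, δ (tp a b c) = tp (δ a) b c + tp a (δ b) c + tp a b (δ c)

/-- A weak-local triple derivation: a linear map `T` such that for every continuous
linear functional `φ` and every `a` there is a triple derivation `δ` with `φ (T a) = φ (δ a)`. -/
def IsWeakLocalTripleDerivation (T : A → A) : Prop :=
  IsLinearMap ℂ T ∧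
    ∀ (φ : A →L[ℂ] ℂ) (a : A),
      ∃ δ : A → A, IsTripleDerivation δ ∧ φ (T a) = φ (δ a)

open ComplexConjugate

theorem eq_zero_of_forall_dual_re_eq_zero {E : Type*} [NormedAddCommGroup E] [NormedSpace ℂ E]
    {x : E} (h : ∀ φ : StrongDual ℂ E, (φ x).re = 0) : x = 0 :=
  SeparatingDual.eq_zero_of_forall_dual_eq_zero fun φ =>
    Complex.ext (h φ) (by simpa using h (Complex.I • φ))

theorem peirceTwo_eq_neg_of_eq_add {R : Type*} [NonUnitalRing R] [Star R] {e d : R}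
    (he : e * star e * e = e) (hd : d = d * star e * e + e * star e * d + e * star d * e) :
    e * star e * d * star e * e = -(e * star d * e) := by
  have hee_mul : ∀ x : R, e * (star e * (e * x)) = e * x := fun x => by
    rw [← mul_assoc, ← mul_assoc, he]
  have hee : e * (star e * e) = e := by rw [← mul_assoc, he]
  have h := congrArg (fun x => e * star e * x * star e * e) hd
  simp only [mul_add, add_mul, mul_assoc, hee_mul, hee] at h
  simp only [mul_assoc]
  exact eq_neg_of_add_eq_zero_left (left_eq_add.mp (h.trans (add_assoc _ _ _)))

section TripleDerivation

variable {B : Type*} [NonUnitalNormedRing B] [StarRing B] [NormedSpace ℂ B]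

theorem tp_self_of_partialIsometry {e : B} (he : e * star e * e = e) : tp e e e = e := by
  rw [tp, he, ← two_smul ℂ, smul_smul]
  norm_num

theorem IsTripleDerivation.apply_partialIsometry {δ : B → B} (hδ : IsTripleDerivation δ)
    {e : B} (he : e * star e * e = e) :
    δ e = δ e * star e * e + e * star e * δ e + e * star (δ e) * e := by
  conv_lhs => rw [← tp_self_of_partialIsometry he, hδ.2]
  simp only [tp]
  module

theorem IsTripleDerivation.peirceTwo_apply_eq_neg {δ : B → B} (hδ : IsTripleDerivation δ)
    {e : B} (he : e * star e * e = e) :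
    e * star e * δ e * star e * e = -(e * star (δ e) * e) :=
  peirceTwo_eq_neg_of_eq_add he (hδ.apply_partialIsometry he)

end TripleDerivation

section PeirceFunctional

variable {B : Type*} [NonUnitalNormedRing B] [StarRing B] [ContinuousStar B] [NormedSpace ℂ B]
  [IsScalarTower ℂ B B] [SMulCommClass ℂ B B] [StarModule ℂ B]

noncomputable def peirceFunctional (φ : StrongDual ℂ B) (e : B) : StrongDual ℂ B where
  toFun x := φ (e * star e * x * star e * e) + conj (φ (e * star x * e))
  map_add' x y := by
    simp only [mul_add, add_mul, star_add, map_add]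
    ring
  map_smul' c x := by
    simp only [star_smul, mul_smul_comm, smul_mul_assoc, map_smul, smul_eq_mul, RingHom.id_apply,
      map_mul, starRingEnd_apply, star_star]
    ring
  cont := by fun_prop

theorem re_peirceFunctional_apply (φ : StrongDual ℂ B) (e x : B) :
    (peirceFunctional φ e x).re = (φ (e * star e * x * star e * e + e * star x * e)).re := by
  simp [peirceFunctional]

end PeirceFunctional

/-- For a weak-local triple derivation `T` and a partial isometry `e`,
`P₂(e)(T e) = -Q(e)(T e)`. -/
theorem stmt6 (T : A → A) (hT : IsWeakLocalTripleDerivation T)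
    (e : A) (he : e * star e * e = e) :
    e * star e * T e * star e * e = -(e * star (T e) * e) := by
  refine eq_neg_of_add_eq_zero_left (eq_zero_of_forall_dual_re_eq_zero fun φ => ?_)
  obtain ⟨δ, hδ, hTδ⟩ := hT.2 (peirceFunctional φ e) e
  rw [← re_peirceFunctional_apply, hTδ, re_peirceFunctional_apply,
    hδ.peirceTwo_apply_eq_neg he, neg_add_cancel, map_zero, Complex.zero_re]
end

section
/- Let A be a C*-algebra in which every element can be approximated in norm by finite linear combinations λ₁e₁ + ⋯ + λₙeₙ with real coefficients λᵢ and mutually orthogonal partial isometries e₁,…,eₙ (eᵢ eⱼ* = 0 and eⱼ* eᵢ = 0 for i ≠ j). If T : A → A is a bounded linear operator satisfying T(e) = 2{e,e,T(e)} + {e,T(e),e} for every partial isometry e in A, then T is a triple derivation. -/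
/-!
Write `D(a,b,c) = T{a,b,c} - {Ta,b,c} - {a,Tb,c} - {a,b,Tc}`. It is linear in `a` and `c`,
conjugate-linear in `b` and symmetric in `a, c`, and the hypothesis on `T` says exactly that
`D(e,e,e) = 0` for every tripotent `e`. For orthogonal tripotents `a, b` and `ω⁴ = 1` the
element `a + ωb` is again a tripotent, and the discrete Fourier transform in `ω` of
`D(a+ωb, a+ωb, a+ωb)` isolates `D(a,b,a)`, `D(a,a,b)` and `D(a,b,b)`, which therefore vanish;
polarizing in the outer variables covers three mutually orthogonal tripotents. Hence `D`
vanishes on the span of any orthogonal family of tripotents, so the cube `D(x,x,x)` vanishes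
on a dense set and, by continuity, everywhere. The same Fourier argument, now with all cubes
zero, gives `D = 0`.
-/

variable {A : Type*} [NonUnitalNormedRing A] [StarRing A] [CStarRing A]
  [NormedSpace ℂ A] [IsScalarTower ℂ A A] [SMulCommClass ℂ A A]
  [StarModule ℂ A] [CompleteSpace A]

set_option linter.unusedSectionVars false

section Tripotent

variable {R : Type*} [NonUnitalRing R] [StarRing R]

def IsTripotent (e : R) : Prop := e * star e * e = e

def IsOrthogonal (a b : R) : Prop := a * star b = 0 ∧ star b * a = 0

theorem IsOrthogonal.symm {a b : R} (h : IsOrthogonal a b) : IsOrthogonal b a :=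
  ⟨by simpa using congrArg star h.1, by simpa using congrArg star h.2⟩

theorem IsOrthogonal.add_left {a b c : R} (ha : IsOrthogonal a c) (hb : IsOrthogonal b c) :
    IsOrthogonal (a + b) c :=
  ⟨by rw [add_mul, ha.1, hb.1, add_zero], by rw [mul_add, ha.2, hb.2, add_zero]⟩

theorem IsTripotent.add {e f : R} (he : IsTripotent e) (hf : IsTripotent f)
    (h : IsOrthogonal e f) : IsTripotent (e + f) := by
  have h' := h.symm
  have hsq : (e + f) * star (e + f) = e * star e + f * star f := by
    rw [star_add, add_mul, mul_add, mul_add, h.1, h'.1, add_zero, zero_add]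
  unfold IsTripotent at *
  rw [hsq, add_mul, mul_add, mul_add, he, hf, mul_assoc e, mul_assoc f, h'.2, h.2, mul_zero,
    mul_zero, add_zero, zero_add]

variable [Module ℂ R] [IsScalarTower ℂ R R] [SMulCommClass ℂ R R] [StarModule ℂ R]

theorem IsTripotent.smul {e : R} (he : IsTripotent e) {ω : ℂ} (hω : star ω * ω = 1) :
    IsTripotent (ω • e) := by
  unfold IsTripotent at *
  rw [star_smul, smul_mul_smul_comm, smul_mul_smul_comm, he, mul_assoc, hω, mul_one]

theorem IsOrthogonal.smul_right {a b : R} (h : IsOrthogonal a b) (c : ℂ) :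
    IsOrthogonal a (c • b) :=
  ⟨by rw [star_smul, mul_smul_comm, h.1, smul_zero],
    by rw [star_smul, smul_mul_assoc, h.2, smul_zero]⟩

end Tripotent

section Sesquilinear

open Complex

variable {E F : Type*} [AddCommGroup E] [Module ℂ E] [AddCommGroup F] [Module ℂ F]
  (Φ : E →ₗ[ℂ] E →ₗ⋆[ℂ] E →ₗ[ℂ] F)

theorem mixed_eq_zero_of_cube_eq_zero (hΦ : ∀ a b c, Φ a b c = Φ c b a) {a b : E}
    (ha : Φ a a a = 0) (hb : Φ b b b = 0)
    (hab : ∀ ω ∈ ({1, -1, I, -I} : Set ℂ),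
      Φ (a + ω • b) (a + ω • b) (a + ω • b) = 0) :
    Φ a b a = 0 ∧ Φ a a b = 0 ∧ Φ a b b = 0 := by
  have h1 := hab 1 (by simp)
  have h2 := hab (-1) (by simp)
  have h3 := hab I (by simp)
  have h4 := hab (-I) (by simp)
  simp only [map_add, map_smul, map_smulₛₗ, LinearMap.add_apply, LinearMap.smul_apply,
    map_neg, conj_I, one_smul, neg_smul, LinearMap.neg_apply, neg_neg,
    hΦ b a a, hΦ b b a, ha, hb] at h1 h2 h3 h4
  -- average against `ω⁻¹ ^ k` over the fourth roots of unity, using `conj ω = ω³`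
  refine ⟨?_, ?_, ?_⟩
  · linear_combination (norm := (match_scalars <;> ring_nf <;> simp [I_sq]))
      (4⁻¹ : ℂ) • (h1 - h2 + I • h3 - I • h4)
  · linear_combination (norm := (match_scalars <;> ring_nf <;> simp [I_sq]))
      (8⁻¹ : ℂ) • (h1 - h2 - I • h3 + I • h4)
  · linear_combination (norm := (match_scalars <;> ring_nf <;> simp [I_sq]))
      (8⁻¹ : ℂ) • (h1 + h2 + h3 + h4)

theorem apply_eq_zero_of_outer_diag_eq_zero (hΦ : ∀ a b c, Φ a b c = Φ c b a) {a b c : E}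
    (ha : Φ a b a = 0) (hc : Φ c b c = 0) (hac : Φ (a + c) b (a + c) = 0) : Φ a b c = 0 := by
  simp only [map_add, LinearMap.add_apply, ha, hc, hΦ c b a] at hac
  linear_combination (norm := module) (2⁻¹ : ℂ) • hac

theorem eq_zero_of_cube_eq_zero (hΦ : ∀ a b c, Φ a b c = Φ c b a) (h : ∀ x, Φ x x x = 0)
    (a b c : E) : Φ a b c = 0 := by
  have hout : ∀ x y, Φ x y x = 0 := fun x y =>
    (mixed_eq_zero_of_cube_eq_zero Φ hΦ (h x) (h y) fun ω _ => h _).1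
  exact apply_eq_zero_of_outer_diag_eq_zero Φ hΦ (hout a b) (hout c b) (hout (a + c) b)

theorem apply_eq_zero_of_mem_span {s : Set E}
    (h : ∀ x ∈ s, ∀ y ∈ s, ∀ z ∈ s, Φ x y z = 0)
    {x y z : E} (hx : x ∈ Submodule.span ℂ s) (hy : y ∈ Submodule.span ℂ s)
    (hz : z ∈ Submodule.span ℂ s) : Φ x y z = 0 := by
  have hz' : ∀ x ∈ s, ∀ y ∈ s, Φ x y z = 0 := fun x hx y hy =>
    LinearMap.eqOn_span (g := 0) (fun z hz => h x hx y hy z hz) hz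
  have hy' : ∀ x ∈ s, Φ x y z = 0 := fun x hx =>
    LinearMap.eqOn_span (f := (Φ x).flip z) (g := 0) (fun y hy => hz' x hx y hy) hy
  exact LinearMap.eqOn_span (f := (Φ.flip y).flip z) (g := 0) (fun x hx => hy' x hx) hx

end Sesquilinear

section TripleProduct

theorem tp_comm (a b c : A) : tp a b c = tp c b a := by rw [tp, tp, add_comm]

theorem IsTripotent.tp_self {e : A} (he : IsTripotent e) : tp e e e = e := by
  rw [tp, he, ← two_smul ℂ, smul_smul]
  norm_num

variable (T : A →L[ℂ] A)

noncomputable def leibnizDefect : A →ₗ[ℂ] A →ₗ⋆[ℂ] A →ₗ[ℂ] A :=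
  LinearMap.mk₂'ₛₗ (RingHom.id ℂ) (starRingEnd ℂ)
    (fun a b =>
      { toFun := fun c => T (tp a b c) - tp (T a) b c - tp a (T b) c - tp a b (T c)
        map_add' := fun c c' => by simp only [tp, map_add, map_smul, add_mul, mul_add]; module
        map_smul' := fun s c => by
          simp only [RingHom.id_apply, tp, map_add, map_smul, smul_mul_assoc, mul_smul_comm]
          module })
    (fun a a' b => LinearMap.ext fun c => by
      simp only [LinearMap.coe_mk, AddHom.coe_mk, LinearMap.add_apply, tp, map_add, map_smul,
        add_mul, mul_add]
      module)
    (fun s a b => LinearMap.ext fun c => by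
      simp only [LinearMap.coe_mk, AddHom.coe_mk, LinearMap.smul_apply, RingHom.id_apply, tp,
        map_add, map_smul, smul_mul_assoc, mul_smul_comm]
      module)
    (fun a b b' => LinearMap.ext fun c => by
      simp only [LinearMap.coe_mk, AddHom.coe_mk, LinearMap.add_apply, tp, map_add, map_smul,
        star_add, add_mul, mul_add]
      module)
    (fun s a b => LinearMap.ext fun c => by
      simp only [LinearMap.coe_mk, AddHom.coe_mk, LinearMap.smul_apply, Complex.star_def, tp,
        map_add, map_smul, star_smul, smul_mul_assoc, mul_smul_comm]
      module)

theorem leibnizDefect_apply (a b c : A) :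
    leibnizDefect T a b c = T (tp a b c) - tp (T a) b c - tp a (T b) c - tp a b (T c) :=
  rfl

theorem leibnizDefect_comm (a b c : A) : leibnizDefect T a b c = leibnizDefect T c b a := by
  simp only [leibnizDefect_apply, tp_comm a b c, tp_comm (T a) b c, tp_comm a (T b) c,
    tp_comm a b (T c)]
  abel

theorem continuous_leibnizDefect_diag : Continuous fun x => leibnizDefect T x x x := by
  simp only [leibnizDefect_apply, tp]
  fun_prop

theorem isTripleDerivation_of_leibnizDefect_eq_zero (h : ∀ a b c, leibnizDefect T a b c = 0) :
    IsTripleDerivation T :=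
  ⟨T.toLinearMap.isLinear, fun a b c => by
    rw [← sub_eq_zero, ← h a b c, leibnizDefect_apply, sub_sub, sub_sub, add_assoc]⟩

theorem leibnizDefect_self_eq_zero_iff {e : A} (he : IsTripotent e) :
    leibnizDefect T e e e = 0 ↔ T e = (2 : ℂ) • tp e e (T e) + tp e (T e) e := by
  rw [leibnizDefect_apply, he.tp_self, tp_comm (T e), sub_sub, sub_sub, sub_eq_zero, two_smul,
    add_right_comm, add_assoc]

end TripleProduct

section Tripotents

variable {T : A →L[ℂ] A} (hT : ∀ e : A, IsTripotent e → leibnizDefect T e e e = 0)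
include hT

theorem leibnizDefect_mixed_eq_zero {a b : A} (ha : IsTripotent a) (hb : IsTripotent b)
    (hab : IsOrthogonal a b) :
    leibnizDefect T a b a = 0 ∧ leibnizDefect T a a b = 0 ∧ leibnizDefect T a b b = 0 := by
  refine mixed_eq_zero_of_cube_eq_zero _ (leibnizDefect_comm T) (hT a ha) (hT b hb)
    fun ω hω => hT _ (ha.add (hb.smul ?_) (hab.smul_right ω))
  rcases hω with rfl | rfl | rfl | rfl <;> simp

theorem leibnizDefect_eq_zero_of_isOrthogonal {a b c : A} (ha : IsTripotent a)
    (hb : IsTripotent b) (hc : IsTripotent c) (hab : IsOrthogonal a b) (hcb : IsOrthogonal c b)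
    (hac : IsOrthogonal a c) : leibnizDefect T a b c = 0 :=
  apply_eq_zero_of_outer_diag_eq_zero _ (leibnizDefect_comm T)
    (leibnizDefect_mixed_eq_zero hT ha hb hab).1 (leibnizDefect_mixed_eq_zero hT hc hb hcb).1
    (leibnizDefect_mixed_eq_zero hT (ha.add hc hac) hb (hab.add_left hcb)).1

theorem leibnizDefect_family_eq_zero {ι : Type*} {e : ι → A} (he : ∀ i, IsTripotent (e i))
    (horth : Pairwise fun i j => IsOrthogonal (e i) (e j)) (i j k : ι) :
    leibnizDefect T (e i) (e j) (e k) = 0 := by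
  rcases eq_or_ne i j with rfl | hij
  · rcases eq_or_ne i k with rfl | hik
    · exact hT _ (he i)
    · exact (leibnizDefect_mixed_eq_zero hT (he i) (he k) (horth hik)).2.1
  rcases eq_or_ne j k with rfl | hjk
  · exact (leibnizDefect_mixed_eq_zero hT (he i) (he j) (horth hij)).2.2
  rcases eq_or_ne i k with rfl | hik
  · exact (leibnizDefect_mixed_eq_zero hT (he i) (he j) (horth hij)).1
  exact leibnizDefect_eq_zero_of_isOrthogonal hT (he i) (he j) (he k) (horth hij)
    (horth hjk).symm (horth hik)

theorem leibnizDefect_eq_zero_of_mem_span {ι : Type*} {e : ι → A}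
    (he : ∀ i, IsTripotent (e i))
    (horth : Pairwise fun i j => IsOrthogonal (e i) (e j)) {x y z : A}
    (hx : x ∈ Submodule.span ℂ (Set.range e)) (hy : y ∈ Submodule.span ℂ (Set.range e))
    (hz : z ∈ Submodule.span ℂ (Set.range e)) : leibnizDefect T x y z = 0 := by
  refine apply_eq_zero_of_mem_span _ ?_ hx hy hz
  rintro _ ⟨i, rfl⟩ _ ⟨j, rfl⟩ _ ⟨k, rfl⟩
  exact leibnizDefect_family_eq_zero hT he horth i j k

end Tripotents

/-- If in a C*-algebra `A` every element is a norm-limit of real linear combinations of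
mutually orthogonal partial isometries, then every bounded linear operator `T` with
`T e = 2{e,e,T e} + {e,T e,e}` for all partial isometries `e` is a triple derivation. -/
theorem stmt10
    (happrox : ∀ (x : A) (ε : ℝ), 0 < ε →
      ∃ (n : ℕ) (lam : Fin n → ℝ) (e : Fin n → A),
        (∀ i, e i * star (e i) * e i = e i) ∧
        (∀ i j, i ≠ j → e i * star (e j) = 0 ∧ star (e j) * e i = 0) ∧
        ‖x - ∑ i, (lam i : ℂ) • e i‖ < ε)
    (T : A →L[ℂ] A)
    (hT : ∀ e : A, e * star e * e = e →
      T e = (2 : ℂ) • tp e e (T e) + tp e (T e) e) :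
    IsTripleDerivation (⇑T) := by
  have htrip : ∀ e : A, IsTripotent e → leibnizDefect T e e e = 0 := fun e he =>
    (leibnizDefect_self_eq_zero_iff T he).2 (hT e he)
  have hclosed : IsClosed {x : A | leibnizDefect T x x x = 0} :=
    isClosed_eq (continuous_leibnizDefect_diag T) continuous_const
  have hcube (x : A) : leibnizDefect T x x x = 0 := by
    refine hclosed.closure_subset (Metric.mem_closure_iff.2 fun ε hε => ?_)
    obtain ⟨n, lam, e, he, horth, hx⟩ := happrox x ε hε
    have hmem : ∑ i, (lam i : ℂ) • e i ∈ Submodule.span ℂ (Set.range e) :=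
      Submodule.sum_mem _ fun i _ => Submodule.smul_mem _ _ (Submodule.subset_span ⟨i, rfl⟩)
    exact ⟨_, leibnizDefect_eq_zero_of_mem_span htrip he horth hmem hmem hmem,
      by rwa [dist_eq_norm]⟩
  exact isTripleDerivation_of_leibnizDefect_eq_zero T
    (eq_zero_of_cube_eq_zero _ (leibnizDefect_comm T) hcube)
end

section
/- Let T be a weak-local triple derivation on a C*-algebra A, let e be a partial isometry in A, and let a ∈ A satisfy e e* a e* e = a. Then P₀(e)(T(a)) = 0, i.e., T(a) − e e* T(a) − T(a) e* e + e e* T(a) e* e = 0. -/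
/-!
Write `a = e e* a e* e` as the triple product `{e, e a* e, e}`. For a triple derivation `δ` the
Leibniz rule expands `δ {e, b, e}` into triple products having `e` as an outer factor, and
`P₀(e)` annihilates every element of the form `c e` or `e c`; hence `P₀(e) (δ a) = 0`. Since
`P₀(e)` is a bounded linear map, for each functional `φ` the weak-local property applied to
`φ ∘ P₀(e)` gives `φ (P₀(e) (T a)) = φ (P₀(e) (δ a)) = 0`, and Hahn–Banach gives `P₀(e) (T a) = 0`.
-/

variable {A : Type*} [NonUnitalNormedRing A] [StarRing A] [CStarRing A]
  [NormedSpace ℂ A] [IsScalarTower ℂ A A] [SMulCommClass ℂ A A]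
  [StarModule ℂ A] [CompleteSpace A]

theorem tp_self_star_mul_self {R : Type*} [NonUnitalNormedRing R] [StarRing R]
    [NormedSpace ℂ R] (e a : R) :
    tp e (e * star a * e) e = e * star e * a * star e * e := by
  simp only [tp, star_mul, star_star, mul_assoc]
  rw [← two_smul ℂ, smul_smul]
  norm_num

section Peirce

variable {R : Type*} [NonUnitalNormedRing R] [StarRing R] [NormedSpace ℂ R]
  [IsScalarTower ℂ R R] [SMulCommClass ℂ R R]

noncomputable def peirce0 (e : R) : R →L[ℂ] R :=
  ContinuousLinearMap.id ℂ R - ContinuousLinearMap.mul ℂ R (e * star e)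
    - (ContinuousLinearMap.mul ℂ R).flip (star e * e)
    + (ContinuousLinearMap.mul ℂ R (e * star e)).comp
        ((ContinuousLinearMap.mul ℂ R).flip (star e * e))

theorem peirce0_apply (e x : R) :
    peirce0 e x = x - e * star e * x - x * star e * e + e * star e * x * star e * e := by
  simp [peirce0, mul_assoc]

variable {e : R}

theorem peirce0_mul_self (he : e * star e * e = e) (c : R) : peirce0 e (c * e) = 0 := by
  have hright : ∀ d : R, d * e * star e * e = d * e := fun d => by
    rw [mul_assoc d e, mul_assoc d (e * star e), he]
  have hassoc : e * star e * (c * e) = e * star e * c * e := by simp only [mul_assoc]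
  rw [peirce0_apply, hright, hassoc, hright, ← hassoc]
  abel

theorem peirce0_self_mul (he : e * star e * e = e) (c : R) : peirce0 e (e * c) = 0 := by
  have hleft : e * star e * (e * c) = e * c := by rw [← mul_assoc, he]
  rw [peirce0_apply, hleft]
  abel

theorem peirce0_tp_right (he : e * star e * e = e) (x y : R) : peirce0 e (tp x y e) = 0 := by
  have h : tp x y e = (2⁻¹ : ℂ) • (x * star y * e + e * (star y * x)) := by
    simp only [tp, mul_assoc]
  rw [h, map_smul, map_add, peirce0_mul_self he, peirce0_self_mul he, add_zero, smul_zero]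

theorem peirce0_tp_left (he : e * star e * e = e) (y z : R) : peirce0 e (tp e y z) = 0 := by
  have h : tp e y z = (2⁻¹ : ℂ) • (e * (star y * z) + z * star y * e) := by
    simp only [tp, mul_assoc]
  rw [h, map_smul, map_add, peirce0_mul_self he, peirce0_self_mul he, add_zero, smul_zero]

theorem IsTripleDerivation.peirce0_apply_tp_self {δ : R → R} (hδ : IsTripleDerivation δ)
    (he : e * star e * e = e) (b : R) : peirce0 e (δ (tp e b e)) = 0 := by
  rw [hδ.2, map_add, map_add, peirce0_tp_right he, peirce0_tp_right he, peirce0_tp_left he,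
    add_zero, add_zero]

end Peirce

/-- For a weak-local triple derivation `T`, a partial isometry `e`, and `a` with
`e e* a e* e = a`, we have `P₀(e)(T a) = 0`. -/
theorem stmt13 (T : A → A) (hT : IsWeakLocalTripleDerivation T) (e a : A)
    (he : e * star e * e = e) (ha : e * star e * a * star e * e = a) :
    T a - e * star e * T a - T a * star e * e + e * star e * T a * star e * e = 0 := by
  rw [← peirce0_apply]
  refine SeparatingDual.eq_zero_of_forall_dual_eq_zero (R := ℂ) fun φ => ?_
  obtain ⟨δ, hδ, hφ⟩ := hT.2 (φ.comp (peirce0 e)) a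
  have hδa : peirce0 e (δ a) = 0 := by
    rw [← ha, ← tp_self_star_mul_self]
    exact hδ.peirce0_apply_tp_self he _
  rw [← ContinuousLinearMap.comp_apply, hφ, ContinuousLinearMap.comp_apply, hδa, map_zero]
end
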